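/- Let a and b be natural numbers with a coprime to b and a > b. Then, as polynomials with integer coefficients, X^{ab} - 1 = (X^a - 1) · (Σ_{i=0}^{b-1} X^i) · (1 + (X - 1) · Σ_{i=0}^{b-1} Σ_{j=1}^{⌊ai/b⌋} X^{ai - bj}). -/
import Mathlib


open Polynomial Finset

private lemma tele_aux (b c m : ℕ) (h : b * m ≤ c) :
    ((X : ℤ[X]) ^ b - 1) * ∑ j ∈ Finset.Icc 1 m, (X : ℤ[X]) ^ (c - b * j)
      = X ^ c - X ^ (c - b * m) := by
  induction m with
  | zero => simp
  | succ m ih =>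
    have hq : b * (m + 1) = b * m + b := by ring
    rw [hq] at h ⊢
    have hm : b * m ≤ c := by omega
    rw [Finset.sum_Icc_succ_top (by omega), mul_add, ih hm, hq]
    have expand : ((X : ℤ[X]) ^ b - 1) * X ^ (c - (b * m + b))
        = X ^ (c - b * m) - X ^ (c - (b * m + b)) := by
      rw [sub_mul, one_mul, ← pow_add]
      congr 2
      omega
    rw [expand]
    ring

private lemma bij_aux (a b : ℕ) (hab : Nat.Coprime a b) :
    ∑ i ∈ Finset.range b, (X : ℤ[X]) ^ (a * i % b)
      = ∑ i ∈ Finset.range b, (X : ℤ[X]) ^ i := by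
  rcases Nat.eq_zero_or_pos b with rfl | hb
  · simp
  have hinj : Set.InjOn (fun i => a * i % b) (Finset.range b) := by
    intro i hi j hj hij
    simp only [Finset.coe_range, Set.mem_Iio] at hi hj
    have h1 : a * i ≡ a * j [MOD b] := hij
    have h2 : i ≡ j [MOD b] := Nat.ModEq.cancel_left_of_coprime hab.symm h1
    have h4 : i % b = j % b := h2
    rwa [Nat.mod_eq_of_lt hi, Nat.mod_eq_of_lt hj] at h4
  have himg : Finset.image (fun i => a * i % b) (Finset.range b) = Finset.range b := by
    apply Finset.eq_of_subset_of_card_le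
    · intro x hx
      simp only [Finset.mem_image, Finset.mem_range] at hx ⊢
      obtain ⟨i, _, rfl⟩ := hx
      exact Nat.mod_lt _ hb
    · rw [Finset.card_image_of_injOn hinj]
  conv_rhs => rw [← himg, Finset.sum_image hinj]

theorem stmt_2 (a b : ℕ) (hab : Nat.Coprime a b) (hgt : a > b) :
    (X : ℤ[X]) ^ (a * b) - 1 =
      ((X : ℤ[X]) ^ a - 1) * (∑ i ∈ Finset.range b, (X : ℤ[X]) ^ i) *
        (1 + (X - 1) *
          ∑ i ∈ Finset.range b, ∑ j ∈ Finset.Icc 1 (a * i / b), (X : ℤ[X]) ^ (a * i - b * j)) := by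
  set S : ℤ[X] := ∑ i ∈ Finset.range b, ∑ j ∈ Finset.Icc 1 (a * i / b),
      (X : ℤ[X]) ^ (a * i - b * j) with hS
  set G : ℤ[X] := ∑ i ∈ Finset.range b, (X : ℤ[X]) ^ i with hG
  have h1 : ((X : ℤ[X]) ^ b - 1) * S
      = ∑ i ∈ Finset.range b, ((X : ℤ[X]) ^ (a * i) - X ^ (a * i % b)) := by
    rw [hS, Finset.mul_sum]
    refine Finset.sum_congr rfl fun i _ => ?_
    have hle : b * (a * i / b) ≤ a * i := Nat.mul_div_le _ _
    rw [tele_aux b (a * i) (a * i / b) hle]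
    congr 2
    have := Nat.mod_add_div (a * i) b
    omega
  have h3 : ∑ i ∈ Finset.range b, (X : ℤ[X]) ^ (a * i % b) = G := bij_aux a b hab
  have key : ((X : ℤ[X]) ^ a - 1) * (((X : ℤ[X]) ^ b - 1) * S)
      = ((X : ℤ[X]) ^ (a * b) - 1) - ((X : ℤ[X]) ^ a - 1) * G := by
    rw [h1, Finset.mul_sum]
    have step : ∀ i ∈ Finset.range b,
        ((X : ℤ[X]) ^ a - 1) * ((X : ℤ[X]) ^ (a * i) - X ^ (a * i % b))
          = ((X : ℤ[X]) ^ (a * (i + 1)) - X ^ (a * i))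
            - ((X : ℤ[X]) ^ a - 1) * X ^ (a * i % b) := by
      intro i _
      have hx : (X : ℤ[X]) ^ (a * (i + 1)) = X ^ a * X ^ (a * i) := by
        rw [← pow_add]; congr 1; ring
      rw [hx]; ring
    rw [Finset.sum_congr rfl step, Finset.sum_sub_distrib,
      Finset.sum_range_sub (fun i => (X : ℤ[X]) ^ (a * i)), ← Finset.mul_sum, h3]
    simp
  have geom : G * ((X : ℤ[X]) - 1) = X ^ b - 1 := geom_sum_mul X b
  linear_combination (-1 : ℤ[X]) * key - ((X : ℤ[X]) ^ a - 1) * S * geom
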